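/- arXiv:2210.03439 — 5 statements merged into one kernel-verified Lean document; each statement's English description precedes it below -/
import Mathlib

section
/- Define T(t,y) as the infimum over all v-Lipschitz curves y_T with y_T(t) = y of min{τ ≥ t : ρ(τ, y_T(τ)) ≤ ℓ}. Then T(t,y) = min{τ ≥ t : ρ(τ, y) ≤ v(τ − t) + ℓ}, where both sides are interpreted as +∞ if the defining sets are empty. -/
/-!
A `v`-Lipschitz target starting at `y` stays within `v (τ - t)` of `y`, and `ρ(τ, ·)` is
`1`-Lipschitz, so every capture time `τ` of such a target satisfies
`ρ(τ, y) ≤ v (τ - t) + ℓ`. Conversely, if `τ` satisfies this inequality, let `η` be a point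
of the compact set `R(τ)` nearest to `y`; the target running from `y` straight towards `η` at
speed `v` and stopping there is within `ℓ` of `η` at time `τ`, so `τ` is a capture time.
-/

open scoped NNReal
open Metric AffineMap

theorem LipschitzOnWith.infDist_le_add_mul {E : Type*} [PseudoMetricSpace E] {f : ℝ → E}
    {K : ℝ≥0} {a t τ : ℝ} (hf : LipschitzOnWith K f (Set.Ici a)) (ht : a ≤ t) (htτ : t ≤ τ)
    (A : Set E) : infDist (f t) A ≤ infDist (f τ) A + K * (τ - t) := by
  have hmove := hf.dist_le_mul t ht τ (ht.trans htτ)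
  rw [Real.dist_eq, abs_of_nonpos (sub_nonpos.2 htτ), neg_sub] at hmove
  exact infDist_le_infDist_add_dist.trans (add_le_add_right hmove _)

theorem exists_lipschitzWith_apply_eq_dist_le {E : Type*} [SeminormedAddCommGroup E]
    [NormedSpace ℝ E] (v : ℝ≥0) {t τ ℓ : ℝ} {y η : E} (hℓ : 0 ≤ ℓ)
    (hyη : dist y η ≤ v * (τ - t) + ℓ) :
    ∃ f : ℝ → E, LipschitzWith v f ∧ f t = y ∧ dist (f τ) η ≤ ℓ := by
  set d := dist y η
  -- Head from `y` towards `η` at speed `v` and stop at `η`; when `d = 0` the junk value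
  -- `x / 0 = 0` makes this the constant path.
  set c : ℝ → ℝ := fun s => Set.projIcc 0 1 zero_le_one (v * (s - t) / d)
  refine ⟨fun s => lineMap y η (c s), ?_, by simp [c], ?_⟩
  · refine LipschitzWith.of_dist_le_mul fun a b => ?_
    calc dist (lineMap y η (c a)) (lineMap y η (c b))
        = dist (c a) (c b) * d := dist_lineMap_lineMap _ _ _ _
      _ ≤ |v * (a - t) / d - v * (b - t) / d| * d := by
          gcongr; exact Set.abs_projIcc_sub_projIcc _
      _ = v * dist a b / d * d := by
          rw [← sub_div, abs_div, abs_of_nonneg dist_nonneg, ← mul_sub, sub_sub_sub_cancel_right,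
            abs_mul, NNReal.abs_eq, Real.dist_eq]
      _ ≤ v * dist a b := by
          rcases eq_or_ne d 0 with hd | hd
          · simp only [hd, div_zero, zero_mul]; positivity
          · rw [div_mul_cancel₀ _ hd]
  · have hc : c τ = max 0 (min 1 (v * (τ - t) / d)) := Set.coe_projIcc _ _ _ _
    rw [dist_lineMap_right, Real.norm_eq_abs, abs_of_nonneg (by rw [hc]; simp)]
    rcases (dist_nonneg : 0 ≤ d).eq_or_lt with hd | hd
    · rw [← hd, mul_zero]; exact hℓ
    rcases le_total (v * (τ - t) / d) 1 with hx | hx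
    · calc (1 - c τ) * d ≤ (1 - v * (τ - t) / d) * d := by
            gcongr; rw [hc, min_eq_right hx]; exact le_max_right _ _
        _ = d - v * (τ - t) := by rw [sub_mul, one_mul, div_mul_cancel₀ _ hd.ne']
        _ ≤ ℓ := by linarith
    · rw [hc, min_eq_left hx, max_eq_right zero_le_one, sub_self, zero_mul]; exact hℓ

theorem best_estimator_eq_general {Y : Type*} [NormedAddCommGroup Y] [NormedSpace ℝ Y]
    (R : ℝ → Set Y)
    (hne : ∀ s, 0 ≤ s → (R s).Nonempty)
    (hcomp : ∀ s, 0 ≤ s → IsCompact (R s))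
    (ρ : ℝ → Y → ℝ) (hρ : ∀ s y, ρ s y = Metric.infDist y (R s))
    (ℓ v : ℝ) (hℓ : 0 ≤ ℓ) (hv : 0 ≤ v)
    (t : ℝ) (ht : 0 ≤ t) (y : Y) :
    (⨅ yT : {f : ℝ → Y // LipschitzOnWith (Real.toNNReal v) f (Set.Ici (0 : ℝ)) ∧ f t = y},
        sInf {s : EReal | ∃ τ : ℝ, s = (τ : EReal) ∧ t ≤ τ ∧ ρ τ (yT.1 τ) ≤ ℓ})
      = sInf {s : EReal | ∃ τ : ℝ, s = (τ : EReal) ∧ t ≤ τ ∧ ρ τ y ≤ v * (τ - t) + ℓ} := by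
  have hv' : (v.toNNReal : ℝ) = v := Real.coe_toNNReal v hv
  apply le_antisymm
  · refine le_sInf ?_
    rintro _ ⟨τ, rfl, htτ, hτ⟩
    have hτ0 : 0 ≤ τ := ht.trans htτ
    obtain ⟨η, hη, hyη⟩ := (hcomp τ hτ0).exists_infDist_eq_dist (hne τ hτ0) y
    rw [hρ, hyη, ← hv'] at hτ
    obtain ⟨f, hf, hft, hfτ⟩ := exists_lipschitzWith_apply_eq_dist_le v.toNNReal hℓ hτ
    refine iInf_le_of_le ⟨f, hf.lipschitzOnWith, hft⟩ (sInf_le ⟨τ, rfl, htτ, ?_⟩)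
    rw [hρ]
    exact (infDist_le_dist_of_mem hη).trans hfτ
  · refine le_iInf fun ⟨f, hf, hft⟩ => sInf_le_sInf ?_
    rintro _ ⟨τ, rfl, htτ, hτ⟩
    refine ⟨τ, rfl, htτ, ?_⟩
    have hcurve := hf.infDist_le_add_mul ht htτ (R τ)
    rw [hρ] at hτ ⊢
    rw [hft, hv'] at hcurve
    linarith

/-- Lemma 3 of the paper: the best universal lower estimator
`T(t,y)`, defined as the infimum over all `v`-Lipschitz target trajectories
passing through `y` at time `t` of the first time `τ ≥ t` with
`ρ(τ, y_T(τ)) ≤ ℓ`, equals the first time `τ ≥ t` with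
`ρ(τ, y) ≤ v(τ - t) + ℓ`.  Infima are taken in `EReal`, so that both sides
are `+∞` when the corresponding sets are empty. -/
theorem best_estimator_eq {Y : Type*} [NormedAddCommGroup Y] [NormedSpace ℝ Y]
    [FiniteDimensional ℝ Y]
    (R : ℝ → Set Y)
    (hne : ∀ s, 0 ≤ s → (R s).Nonempty)
    (hcomp : ∀ s, 0 ≤ s → IsCompact (R s))
    (ρ : ℝ → Y → ℝ) (hρ : ∀ s y, ρ s y = Metric.infDist y (R s))
    (ℓ v : ℝ) (hℓ : 0 ≤ ℓ) (hv : 0 ≤ v)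
    (t : ℝ) (ht : 0 ≤ t) (y : Y) :
    (⨅ yT : {f : ℝ → Y // LipschitzOnWith (Real.toNNReal v) f (Set.Ici (0 : ℝ)) ∧ f t = y},
        sInf {s : EReal | ∃ τ : ℝ, s = (τ : EReal) ∧ t ≤ τ ∧ ρ τ (yT.1 τ) ≤ ℓ})
      = sInf {s : EReal | ∃ τ : ℝ, s = (τ : EReal) ∧ t ≤ τ ∧ ρ τ y ≤ v * (τ - t) + ℓ} :=
  best_estimator_eq_general R hne hcomp ρ hρ ℓ v hℓ hv t ht y
end

section
/- Define the simple estimator τ(t,y) = t + (ρ(t,y) − ℓ)/(1+v) if ρ(t,y) > ℓ, and τ(t,y) = t otherwise. If ρ(·,y) is 1-Lipschitz and T(t,y) = min{s ≥ t : ρ(s,y) ≤ v(s−t) + ℓ} is finite with ρ(T(t,y),y) = v(T(t,y)−t) + ℓ, then τ(t,y) ≤ T(t,y) for all t ∈ ℝ≥0 and y ∈ Y. -/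
/-- Lemma 4 of the paper: the simple universal lower estimator never
exceeds the best universal lower estimator: `τ(t,y) ≤ T(t,y)`. -/
theorem simple_le_best {Y : Type*} [NormedAddCommGroup Y] [NormedSpace ℝ Y]
    (ρ : ℝ → Y → ℝ) (ℓ : ℝ) (hℓ : 0 ≤ ℓ) (v : NNReal)
    (t : ℝ) (ht : 0 ≤ t) (y : Y)
    (hlip : LipschitzOnWith 1 (fun s => ρ s y) (Set.Ici (0 : ℝ)))
    (Tty : ℝ)
    (hT : IsLeast {s : ℝ | t ≤ s ∧ ρ s y ≤ (v : ℝ) * (s - t) + ℓ} Tty)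
    (hroot : ρ Tty y = (v : ℝ) * (Tty - t) + ℓ) :
    (if ℓ < ρ t y then t + (ρ t y - ℓ) / (1 + (v : ℝ)) else t) ≤ Tty := by
  obtain ⟨⟨htT, _⟩, _⟩ := hT
  split_ifs with h
  · have hTmem : Tty ∈ Set.Ici (0 : ℝ) := le_trans ht htT
    have hdist := hlip.dist_le_mul t (Set.mem_Ici.mpr ht) Tty hTmem
    rw [Real.dist_eq, Real.dist_eq] at hdist
    have h1 : ρ t y - ρ Tty y ≤ |t - Tty| := by
      calc ρ t y - ρ Tty y ≤ |ρ t y - ρ Tty y| := le_abs_self _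
        _ ≤ 1 * |t - Tty| := hdist
        _ = |t - Tty| := one_mul _
    have h2 : |t - Tty| = Tty - t := by rw [abs_sub_comm]; exact abs_of_nonneg (by linarith)
    have h3 : ρ t y ≤ (1 + (v : ℝ)) * (Tty - t) + ℓ := by rw [hroot] at h1; nlinarith
    have hv : (0:ℝ) < 1 + (v : ℝ) := by positivity
    have h4 : (ρ t y - ℓ) / (1 + (v : ℝ)) ≤ Tty - t := by
      rw [div_le_iff₀ hv]; nlinarith
    linarith
  · exact htT
end

section
/- Let g : ℝ≥0 → ℝ≥0 be continuous with g(t) = ρ(t, y_T(t)). Define t₀ = 0 and t_n = t_{n−1} + max(0, (g(t_{n−1}) − ℓ))/(1+v). Assume: (a) for each n, if g(t_{n−1}) > ℓ then g(s) > ℓ for all s ∈ [t_{n−1}, t_n) (the lower-estimator property). If T* = min{t : g(t) ≤ ℓ} is finite, then the nondecreasing sequence (t_n) satisfies t_n ≤ T* for all n and converges to T*. -/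
open Filter Topology

/-!
The iteration is `t (n + 1) = τ (t n)` for the map `τ s = s + max 0 (g s - ℓ) / (1 + v)`, which
satisfies `s ≤ τ s` with equality exactly when `g s ≤ ℓ`. The lower-estimator property says that
`g > ℓ` on `[t n, t (n + 1))` whenever `t n` is not yet a solution, so no iterate can jump past
`T*`. The sequence is therefore nondecreasing and bounded by `T*`; its limit `L` is a fixed point
of the continuous map `τ`, hence `g L ≤ ℓ`, and minimality of `T*` forces `L = T*`.
-/

theorem isFixedPt_of_tendsto_of_continuousWithinAt {α : Type*} [TopologicalSpace α] [T2Space α]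
    {f : α → α} {s : Set α} {x : ℕ → α} {L : α} (hx : ∀ n, x (n + 1) = f (x n))
    (hxs : ∀ n, x n ∈ s) (hL : Tendsto x atTop (𝓝 L)) (hf : ContinuousWithinAt f s L) :
    Function.IsFixedPt f L := by
  have hfx : Tendsto (fun n => f (x n)) atTop (𝓝 (f L)) :=
    hf.tendsto.comp (tendsto_nhdsWithin_iff.mpr ⟨hL, Eventually.of_forall hxs⟩)
  have hx' : Tendsto (fun n => f (x n)) atTop (𝓝 L) := by
    simpa only [hx] using (tendsto_add_atTop_iff_nat 1).mpr hL
  exact tendsto_nhds_unique hfx hx'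

/-- The simple universal lower estimator `τ(s, y_T(s))` of the interception time, with
`g s = ρ(s, y_T(s))`. -/
noncomputable def simpleEstimator (g : ℝ → ℝ) (ℓ v s : ℝ) : ℝ :=
  s + max 0 (g s - ℓ) / (1 + v)

section simpleEstimator

variable {g : ℝ → ℝ} {ℓ v s : ℝ}

theorem le_simpleEstimator (hv : 0 ≤ v) : s ≤ simpleEstimator g ℓ v s := by
  unfold simpleEstimator
  have : 0 ≤ max 0 (g s - ℓ) / (1 + v) := by positivity
  linarith

theorem isFixedPt_simpleEstimator_iff (hv : 0 ≤ v) :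
    Function.IsFixedPt (simpleEstimator g ℓ v) s ↔ g s ≤ ℓ := by
  have : (1 + v) ≠ 0 := by linarith
  simp [Function.IsFixedPt, simpleEstimator, div_eq_zero_iff, this]

theorem continuousOn_simpleEstimator {S : Set ℝ} (hg : ContinuousOn g S) :
    ContinuousOn (simpleEstimator g ℓ v) S := by
  unfold simpleEstimator
  fun_prop

theorem simpleEstimator_le {T : ℝ} (hv : 0 ≤ v) (hs : s ≤ T) (hT : g T ≤ ℓ)
    (hsafe : ℓ < g s → ∀ r ∈ Set.Ico s (simpleEstimator g ℓ v s), ℓ < g r) :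
    simpleEstimator g ℓ v s ≤ T := by
  rcases le_or_gt (g s) ℓ with hgs | hgs
  · rwa [((isFixedPt_simpleEstimator_iff hv).mpr hgs).eq]
  · by_contra! hlt
    exact (hsafe hgs T ⟨hs, hlt⟩).not_ge hT

end simpleEstimator

theorem simple_iteration_converges_general (g : ℝ → ℝ) (ℓ v : ℝ) (hv : 0 ≤ v)
    (hg : ContinuousOn g (Set.Ici (0 : ℝ)))
    (t : ℕ → ℝ) (ht0 : t 0 = 0)
    (hiter : ∀ n : ℕ, t (n + 1) = t n + max 0 (g (t n) - ℓ) / (1 + v))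
    (hsafe : ∀ n : ℕ, ℓ < g (t n) → ∀ s ∈ Set.Ico (t n) (t (n + 1)), ℓ < g s)
    (Tstar : ℝ) (hT : IsLeast {s : ℝ | 0 ≤ s ∧ g s ≤ ℓ} Tstar) :
    Monotone t ∧ (∀ n, t n ≤ Tstar) ∧ Tendsto t atTop (nhds Tstar) := by
  have hstep : ∀ n, t (n + 1) = simpleEstimator g ℓ v (t n) := hiter
  have hmono : Monotone t :=
    monotone_nat_of_le_succ fun n => (hstep n).symm ▸ le_simpleEstimator hv
  have hle : ∀ n, t n ≤ Tstar := by
    intro n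
    induction n with
    | zero => exact ht0 ▸ hT.1.1
    | succ n ih =>
      rw [hstep n]
      exact simpleEstimator_le hv ih hT.1.2 (hstep n ▸ hsafe n)
  have hnonneg : ∀ n, 0 ≤ t n := fun n => ht0 ▸ hmono (Nat.zero_le n)
  have hbdd : BddAbove (Set.range t) := ⟨Tstar, Set.forall_mem_range.mpr hle⟩
  set L := ⨆ n, t n
  have hlim : Tendsto t atTop (𝓝 L) := tendsto_atTop_ciSup hmono hbdd
  have hL0 : 0 ≤ L := (hnonneg 0).trans (le_ciSup hbdd 0)
  have hfix : Function.IsFixedPt (simpleEstimator g ℓ v) L :=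
    isFixedPt_of_tendsto_of_continuousWithinAt hstep hnonneg hlim
      (continuousOn_simpleEstimator hg L hL0)
  have hL : L = Tstar :=
    le_antisymm (ciSup_le hle) (hT.2 ⟨hL0, (isFixedPt_simpleEstimator_iff hv).mp hfix⟩)
  exact ⟨hmono, hle, hL ▸ hlim⟩

/-- Lemma 6 of the paper, finite case: the fixed-point iteration of the
simple universal lower estimator is nondecreasing, never overshoots the minimal
interception time `T*`, and converges to it. -/
theorem simple_iteration_converges (g : ℝ → ℝ) (ℓ v : ℝ) (hℓ : 0 ≤ ℓ) (hv : 0 ≤ v)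
    (hg : ContinuousOn g (Set.Ici (0 : ℝ)))
    (t : ℕ → ℝ) (ht0 : t 0 = 0)
    (hiter : ∀ n : ℕ, t (n + 1) = t n + max 0 (g (t n) - ℓ) / (1 + v))
    (hsafe : ∀ n : ℕ, ℓ < g (t n) → ∀ s ∈ Set.Ico (t n) (t (n + 1)), ℓ < g s)
    (Tstar : ℝ) (hT : IsLeast {s : ℝ | 0 ≤ s ∧ g s ≤ ℓ} Tstar) :
    Monotone t ∧ (∀ n, t n ≤ Tstar) ∧ Tendsto t atTop (nhds Tstar) :=
  simple_iteration_converges_general g ℓ v hv hg t ht0 hiter hsafe Tstar hT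
end

section
/- Suppose the distance function satisfies ρ(t₂, y) ≥ ρ(t₁, y) − (t₂ − t₁) for t₁ ≤ t₂ (from 1-Lipschitzness in t) and y_T is v-Lipschitz. If ρ(t, y_T(t)) > ℓ, then for all s ∈ [t, t + (ρ(t,y_T(t)) − ℓ)/(1+v)) one has ρ(s, y_T(s)) > ℓ. In particular, the simple estimator τ is a universal lower estimator of interception time (Lemma 5 of the paper). -/
/-- Lemma 5 of the paper: if `ρ` is 1-Lipschitz in each argument and
`y_T` is `v`-Lipschitz, then whenever `ρ(t, y_T(t)) > ℓ`, the distance stays above `ℓ`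
on `[t, t + (ρ(t,y_T(t)) - ℓ)/(1+v))`; hence the simple estimator `τ` is a universal
lower estimator of interception time. -/
theorem simple_estimator_is_lower {Y : Type*} [NormedAddCommGroup Y] [NormedSpace ℝ Y]
    (ρ : ℝ → Y → ℝ) (ℓ : ℝ) (hℓ : 0 ≤ ℓ) (v : NNReal)
    (hρt : ∀ y : Y, ∀ t₁ t₂ : ℝ, 0 ≤ t₁ → t₁ ≤ t₂ → ρ t₁ y - (t₂ - t₁) ≤ ρ t₂ y)
    (hρy : ∀ t : ℝ, LipschitzWith 1 (fun y => ρ t y))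
    (yT : ℝ → Y) (hyT : LipschitzOnWith v yT (Set.Ici (0 : ℝ))) :
    ∀ t : ℝ, 0 ≤ t → ℓ < ρ t (yT t) →
      ∀ s ∈ Set.Ico t (t + (ρ t (yT t) - ℓ) / (1 + (v : ℝ))), ℓ < ρ s (yT s) := by
  intro t ht hρℓ s hs
  obtain ⟨hts, hsu⟩ := hs
  have hv1 : (0:ℝ) < 1 + (v : ℝ) := by positivity
  have hs0 : 0 ≤ s := le_trans ht hts
  -- Lipschitz in y
  have h1 : ρ s (yT t) - dist (yT s) (yT t) ≤ ρ s (yT s) := by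
    have := (hρy s).dist_le_mul (yT s) (yT t)
    rw [Real.dist_eq] at this
    have : |ρ s (yT s) - ρ s (yT t)| ≤ dist (yT s) (yT t) := by simpa using this
    have := abs_le.mp this
    linarith [this.1]
  -- Lipschitz of yT
  have h2 : dist (yT s) (yT t) ≤ (v : ℝ) * (s - t) := by
    have := hyT.dist_le_mul s hs0 t ht
    rw [Real.dist_eq, abs_of_nonneg (by linarith : (0:ℝ) ≤ s - t)] at this
    exact this
  -- Lipschitz in t
  have h3 : ρ t (yT t) - (s - t) ≤ ρ s (yT t) := hρt (yT t) t s ht hts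
  -- s - t bound
  have h4 : (s - t) * (1 + (v : ℝ)) < ρ t (yT t) - ℓ := by
    have : s - t < (ρ t (yT t) - ℓ) / (1 + (v : ℝ)) := by linarith
    calc (s - t) * (1 + (v : ℝ)) < (ρ t (yT t) - ℓ) / (1 + (v : ℝ)) * (1 + (v : ℝ)) := by
          exact mul_lt_mul_of_pos_right this hv1
      _ = ρ t (yT t) - ℓ := div_mul_cancel₀ _ (ne_of_gt hv1)
  nlinarith
end

section
/- Termination of Algorithm 1: let g : ℝ≥0 → ℝ≥0 be (1+v)-Lipschitz with min{t : g(t) ≤ ℓ} = T* < ∞, ℓ > 0, ε > 0, and consider t₀ = 0, t_{n+1} = t_n + (g(t_n) − ℓ)/(1+v) while g(t_n) > ℓ(1+ε). Then the algorithm terminates after finitely many steps, outputting some t with g(t) ≤ ℓ(1+ε) and t ≤ T*. -/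
/-- termination of Algorithm 1. For a `(1+v)`-Lipschitz `g` whose
minimal interception time `T* = min{t ≥ 0 : g t ≤ ℓ}` is finite, the simple-estimator
iteration with stopping test `g(t_n) > ℓ(1+ε)` terminates, outputting a time `t` with
`g t ≤ ℓ(1+ε)` and `t ≤ T*`. -/
theorem algorithm_terminates (v : NNReal) (g : ℝ → ℝ) (hg : LipschitzWith (1 + v) g)
    (ℓ ε : ℝ) (hℓ : 0 < ℓ) (hε : 0 < ε)
    (Tstar : ℝ) (hT : IsLeast {s : ℝ | 0 ≤ s ∧ g s ≤ ℓ} Tstar)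
    (t : ℕ → ℝ) (ht0 : t 0 = 0)
    (hiter : ∀ n : ℕ, t (n + 1) =
      if ℓ * (1 + ε) < g (t n) then t n + (g (t n) - ℓ) / (1 + (v : ℝ)) else t n) :
    ∃ N : ℕ, g (t N) ≤ ℓ * (1 + ε) ∧ t N ≤ Tstar := by
  have hv : (0:ℝ) < 1 + (v:ℝ) := by positivity
  obtain ⟨⟨hT0, hgT⟩, hmin⟩ := hT
  have hle : ∀ n, t n ≤ Tstar := by
    intro n
    induction n with
    | zero => rw [ht0]; exact hT0
    | succ n ih =>
      rw [hiter n]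
      split_ifs with h
      · have hd := hg.dist_le_mul (t n) Tstar
        rw [Real.dist_eq, Real.dist_eq] at hd
        push_cast at hd
        have h1 : |t n - Tstar| = Tstar - t n := by
          rw [abs_sub_comm]; exact abs_of_nonneg (by linarith)
        rw [h1] at hd
        have h2 : g (t n) - g Tstar ≤ |g (t n) - g Tstar| := le_abs_self _
        have h3 : (g (t n) - ℓ) / (1 + (v:ℝ)) ≤ Tstar - t n := by
          rw [div_le_iff₀ hv]; nlinarith
        linarith
      · exact ih
  by_contra hcon
  push_neg at hcon
  have hgt : ∀ n, ℓ * (1 + ε) < g (t n) := by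
    intro n
    by_contra h
    push_neg at h
    exact absurd (hle n) (not_le_of_gt (hcon n h))
  have hc : (0:ℝ) < ℓ * ε / (1 + (v:ℝ)) := by positivity
  have hstep : ∀ n, t n + ℓ * ε / (1 + (v:ℝ)) ≤ t (n + 1) := by
    intro n
    rw [hiter n, if_pos (hgt n)]
    have h1 : ℓ * ε ≤ g (t n) - ℓ := by nlinarith [hgt n]
    have h2 : ℓ * ε / (1 + (v:ℝ)) ≤ (g (t n) - ℓ) / (1 + (v:ℝ)) :=
      (div_le_div_iff_of_pos_right hv).mpr h1
    linarith
  have hlb : ∀ n : ℕ, (n:ℝ) * (ℓ * ε / (1 + (v:ℝ))) ≤ t n := by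
    intro n
    induction n with
    | zero => simp [ht0]
    | succ n ih =>
      have := hstep n
      push_cast
      linarith
  obtain ⟨n, hn⟩ := exists_nat_gt (Tstar / (ℓ * ε / (1 + (v:ℝ))))
  have : Tstar < (n:ℝ) * (ℓ * ε / (1 + (v:ℝ))) := by
    rw [div_lt_iff₀ hc] at hn
    linarith
  exact absurd (hle n) (not_le_of_gt (lt_of_lt_of_le this (hlb n)))
end
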